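/- Let α be a finite set, f and q pmfs on α, M ≥ 1 a natural number, and δ a real number with δ ≥ H(q‖f). If X₁,…,X_M are i.i.d. with common pmf f and p̂ denotes their empirical distribution, then Pr(H(p̂‖q) ≥ δ) ≤ (M+1)^{|α|} · exp(−2·M·(δ − H(q‖f))²). -/

import Mathlib

open Finset

/-- `p` is a probability mass function on the finite type `α`. -/
def IsPmf {α : Type*} [Fintype α] (p : α → ℝ) : Prop :=
  (∀ a, 0 ≤ p a) ∧ ∑ a, p a = 1

/-- Squared Hellinger divergence between pmfs on a finite type. -/
noncomputable def hellingerSq {α : Type*} [Fintype α] (p q : α → ℝ) : ℝ :=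
  (1 / 2) * ∑ a, (Real.sqrt (p a) - Real.sqrt (q a)) ^ 2

/-- Hellinger distance between pmfs on a finite type. -/
noncomputable def hellinger {α : Type*} [Fintype α] (p q : α → ℝ) : ℝ :=
  Real.sqrt (hellingerSq p q)

/-- Empirical distribution of the sample `x = (x₁, …, x_M)`. -/
noncomputable def empDist {α : Type*} [Fintype α] [DecidableEq α] {M : ℕ}
    (x : Fin M → α) (a : α) : ℝ :=
  ((Finset.univ.filter fun i => x i = a).card : ℝ) / M

/-!
Write `p̂` for the empirical distribution of the sample `x`. Every `xᵢ` has `p̂ xᵢ > 0`, so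
`∏ f xᵢ = ∏ (f / p̂) xᵢ · ∏ p̂ xᵢ`, and AM-GM over the sample bounds `∏ √((f / p̂) xᵢ)` by the
`M`-th power of the mean, which is the Bhattacharyya coefficient
`∑ √(p̂ f) = 1 - H²(p̂‖f) ≤ exp (-H²(p̂‖f))`. Hence `∏ f xᵢ ≤ exp (-2M H²(p̂‖f)) ∏ p̂ xᵢ`, and
on the event `H(p̂‖q) ≥ δ` the triangle inequality gives `H(p̂‖f) ≥ δ - H(q‖f) ≥ 0`. Finally,
summed over the samples of a fixed type `p`, `∏ p xᵢ` is at most `(∑ p)^M = 1`, and there are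
at most `(M + 1)^|α|` types.
-/

section Hellinger

variable {α : Type*} [Fintype α]

lemma hellinger_eq_mul_dist (p q : α → ℝ) :
    hellinger p q = √(1 / 2) *
      dist (WithLp.toLp 2 fun a => √(p a)) (WithLp.toLp 2 fun a => √(q a)) := by
  rw [EuclideanSpace.dist_eq, hellinger, hellingerSq, ← Real.sqrt_mul (by norm_num)]
  simp [Real.dist_eq, sq_abs]

lemma hellinger_comm (p q : α → ℝ) : hellinger p q = hellinger q p := by
  rw [hellinger_eq_mul_dist, hellinger_eq_mul_dist, dist_comm]

lemma hellinger_triangle (p q r : α → ℝ) :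
    hellinger p r ≤ hellinger p q + hellinger q r := by
  rw [hellinger_eq_mul_dist p r, hellinger_eq_mul_dist p q, hellinger_eq_mul_dist q r, ← mul_add]
  exact mul_le_mul_of_nonneg_left (dist_triangle _ _ _) (Real.sqrt_nonneg _)

lemma hellingerSq_eq_one_sub_sum_sqrt_mul {p q : α → ℝ} (hp : IsPmf p) (hq : IsPmf q) :
    hellingerSq p q = 1 - ∑ a, √(p a * q a) := by
  have hterm : ∀ a, (√(p a) - √(q a)) ^ 2 = p a + q a - 2 * √(p a * q a) := fun a => by
    rw [sub_sq, Real.sq_sqrt (hp.1 a), Real.sq_sqrt (hq.1 a), Real.sqrt_mul (hp.1 a)]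
    ring
  simp only [hellingerSq, hterm, Finset.sum_sub_distrib, Finset.sum_add_distrib, hp.2, hq.2,
    ← Finset.mul_sum]
  ring

lemma sum_sqrt_mul_le_exp_neg_hellinger_sq {p q : α → ℝ} (hp : IsPmf p) (hq : IsPmf q) :
    ∑ a, √(p a * q a) ≤ Real.exp (-hellinger p q ^ 2) := by
  have hsq : hellinger p q ^ 2 = hellingerSq p q :=
    Real.sq_sqrt (mul_nonneg (by norm_num) (Finset.sum_nonneg fun a _ => sq_nonneg _))
  linarith [hellingerSq_eq_one_sub_sum_sqrt_mul hp hq, Real.add_one_le_exp (-hellinger p q ^ 2)]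

end Hellinger

lemma Real.prod_le_arith_mean_pow {ι : Type*} (s : Finset ι) {y : ι → ℝ}
    (hy : ∀ i ∈ s, 0 ≤ y i) : ∏ i ∈ s, y i ≤ ((∑ i ∈ s, y i) / s.card) ^ s.card := by
  rcases s.eq_empty_or_nonempty with rfl | hs
  · simp
  have hcard : (s.card : ℝ) ≠ 0 := by positivity
  have hamgm := Real.geom_mean_le_arith_mean_weighted s (fun _ => (s.card : ℝ)⁻¹) y
    (fun _ _ => by positivity) (by simp [hcard]) hy
  calc ∏ i ∈ s, y i = (∏ i ∈ s, y i ^ (s.card : ℝ)⁻¹) ^ s.card := by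
        rw [← Finset.prod_pow]
        exact Finset.prod_congr rfl fun i hi =>
          (Real.rpow_inv_natCast_pow (hy i hi) hs.card_ne_zero).symm
    _ ≤ ((∑ i ∈ s, y i) / s.card) ^ s.card := by
        gcongr
        · exact Finset.prod_nonneg fun i hi => Real.rpow_nonneg (hy i hi) _
        · simpa [← Finset.mul_sum, div_eq_inv_mul] using hamgm

section Empirical

variable {α : Type*} [Fintype α] [DecidableEq α] {M : ℕ}

lemma empDist_nonneg (x : Fin M → α) (a : α) : 0 ≤ empDist x a := by
  unfold empDist; positivity

lemma empDist_apply_pos (x : Fin M → α) (i : Fin M) : 0 < empDist x (x i) := by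
  have hcount : 0 < (Finset.univ.filter fun j => x j = x i).card :=
    Finset.card_pos.2 ⟨i, by simp⟩
  have hM : 0 < M := i.pos
  unfold empDist
  positivity

lemma sum_empDist_mul (x : Fin M → α) (g : α → ℝ) :
    ∑ a, empDist x a * g a = (∑ i, g (x i)) / M := by
  rw [← Finset.sum_fiberwise' Finset.univ x g, Finset.sum_div]
  refine Finset.sum_congr rfl fun a _ => ?_
  rw [Finset.sum_const, nsmul_eq_mul, empDist]
  ring

lemma isPmf_empDist (hM : 0 < M) (x : Fin M → α) : IsPmf (empDist x) := by
  refine ⟨empDist_nonneg x, ?_⟩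
  simpa [hM.ne'] using sum_empDist_mul x 1

lemma mean_sqrt_div_empDist_eq_sum_sqrt_mul (x : Fin M → α) (f : α → ℝ) :
    (∑ i, √(f (x i) / empDist x (x i))) / M = ∑ a, √(empDist x a * f a) := by
  rw [← sum_empDist_mul x fun a => √(f a / empDist x a)]
  refine Finset.sum_congr rfl fun a _ => ?_
  rcases (empDist_nonneg x a).eq_or_lt with h | h
  · simp [← h]
  · rw [← Real.sqrt_sq h.le, ← Real.sqrt_mul (sq_nonneg _), Real.sqrt_sq h.le]
    congr 1
    field_simp

lemma prod_le_exp_mul_prod_empDist {f : α → ℝ} (hf : IsPmf f) (hM : 0 < M) (x : Fin M → α) :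
    ∏ i, f (x i) ≤
      Real.exp (-2 * M * hellinger (empDist x) f ^ 2) * ∏ i, empDist x (x i) := by
  set p := empDist x
  set z : Fin M → ℝ := fun i => √(f (x i) / p (x i))
  have hsplit : ∏ i, f (x i) = (∏ i, z i) ^ 2 * ∏ i, p (x i) := by
    rw [← Finset.prod_pow, ← Finset.prod_mul_distrib]
    refine Finset.prod_congr rfl fun i _ => ?_
    rw [Real.sq_sqrt (div_nonneg (hf.1 _) (empDist_nonneg x _)),
      div_mul_cancel₀ _ (empDist_apply_pos x i).ne']
  have hamgm : ∏ i, z i ≤ (∑ a, √(p a * f a)) ^ M := by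
    have := Real.prod_le_arith_mean_pow (y := z) Finset.univ fun i _ => Real.sqrt_nonneg _
    rwa [Finset.card_univ, Fintype.card_fin, mean_sqrt_div_empDist_eq_sum_sqrt_mul] at this
  have hbc := sum_sqrt_mul_le_exp_neg_hellinger_sq (isPmf_empDist hM x) hf
  calc ∏ i, f (x i) = (∏ i, z i) ^ 2 * ∏ i, p (x i) := hsplit
    _ ≤ (Real.exp (-hellinger p f ^ 2) ^ M) ^ 2 * ∏ i, p (x i) := by
        have : 0 ≤ ∏ i, p (x i) := Finset.prod_nonneg fun i _ => empDist_nonneg x _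
        gcongr ?_ ^ 2 * _
        exact hamgm.trans (by gcongr)
    _ = Real.exp (-2 * M * hellinger p f ^ 2) * ∏ i, p (x i) := by
        rw [← pow_mul, ← Real.exp_nat_mul]
        push_cast
        ring_nf

lemma prod_le_exp_mul_prod_empDist_of_le_hellinger {f : α → ℝ} (hf : IsPmf f) (hM : 0 < M)
    {x : Fin M → α} {t : ℝ} (ht : 0 ≤ t) (htH : t ≤ hellinger (empDist x) f) :
    ∏ i, f (x i) ≤ Real.exp (-2 * M * t ^ 2) * ∏ i, empDist x (x i) := by
  have hprod : 0 ≤ ∏ i, empDist x (x i) := Finset.prod_nonneg fun i _ => empDist_nonneg x _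
  have hsq : t ^ 2 ≤ hellinger (empDist x) f ^ 2 := pow_le_pow_left₀ ht htH 2
  refine (prod_le_exp_mul_prod_empDist hf hM x).trans ?_
  gcongr ?_ * _
  exact Real.exp_le_exp.2 (mul_le_mul_of_nonpos_left hsq (by simp))

lemma card_image_empDist_le (M : ℕ) :
    (Finset.univ.image (empDist (α := α) (M := M))).card ≤ (M + 1) ^ Fintype.card α := by
  have hsub : Finset.univ.image (empDist (α := α) (M := M)) ⊆
      Finset.univ.image fun (n : α → Fin (M + 1)) a => ((n a : ℕ) : ℝ) / M := by
    intro _ hp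
    obtain ⟨x, -, rfl⟩ := Finset.mem_image.1 hp
    refine Finset.mem_image.2 ⟨fun a => ⟨(Finset.univ.filter fun i => x i = a).card, ?_⟩,
      Finset.mem_univ _, rfl⟩
    exact Nat.lt_succ_of_le ((Finset.card_le_univ _).trans_eq (Fintype.card_fin M))
  calc _ ≤ _ := Finset.card_le_card hsub
    _ ≤ _ := Finset.card_image_le
    _ = _ := by simp

lemma sum_prod_empDist_le (hM : 0 < M) :
    ∑ x : Fin M → α, ∏ i, empDist x (x i) ≤ ((M : ℝ) + 1) ^ Fintype.card α := by
  rw [← Finset.sum_fiberwise_of_maps_to fun x _ =>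
    Finset.mem_image_of_mem empDist (Finset.mem_univ x)]
  calc _ = ∑ p ∈ Finset.univ.image empDist, ∑ x with empDist x = p, ∏ i, p (x i) :=
        Finset.sum_congr rfl fun p _ => Finset.sum_congr rfl fun x hx => by
          rw [(Finset.mem_filter.1 hx).2]
    _ ≤ ∑ p ∈ Finset.univ.image (empDist (α := α) (M := M)), (1 : ℝ) := by
        refine Finset.sum_le_sum fun p hp => ?_
        obtain ⟨y, -, rfl⟩ := Finset.mem_image.1 hp
        calc _ ≤ ∑ x : Fin M → α, ∏ i, empDist y (x i) :=
              Finset.sum_le_sum_of_subset_of_nonneg (Finset.filter_subset _ _)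
                fun x _ _ => Finset.prod_nonneg fun i _ => empDist_nonneg y _
          _ = 1 := by rw [← Fintype.sum_pow, (isPmf_empDist hM y).2, one_pow]
    _ ≤ _ := by
        rw [Finset.sum_const, nsmul_one]
        exact_mod_cast card_image_empDist_le M

end Empirical

theorem prob_hellinger_emp_ge_general {α : Type*} [Fintype α] [DecidableEq α]
    (f q : α → ℝ) (hf : IsPmf f) (M : ℕ) (hM : 1 ≤ M)
    (δ : ℝ) (hδ : hellinger q f ≤ δ) :
    (∑ x : Fin M → α,
        Set.indicator {x : Fin M → α | δ ≤ hellinger (empDist x) q}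
          (fun x => ∏ i, f (x i)) x) ≤
      ((M : ℝ) + 1) ^ (Fintype.card α) *
        Real.exp (-2 * M * (δ - hellinger q f) ^ 2) := by
  set t := δ - hellinger q f
  have hbound : ∀ x : Fin M → α,
      Set.indicator {x : Fin M → α | δ ≤ hellinger (empDist x) q}
          (fun x => ∏ i, f (x i)) x ≤ Real.exp (-2 * M * t ^ 2) * ∏ i, empDist x (x i) := by
    intro x
    have hprod : 0 ≤ ∏ i, empDist x (x i) := Finset.prod_nonneg fun i _ => empDist_nonneg x _
    refine Set.indicator_apply_le' (fun hx => ?_) fun _ => by positivity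
    refine prod_le_exp_mul_prod_empDist_of_le_hellinger hf hM (by linarith) ?_
    linarith [Set.mem_ofPred.1 hx, hellinger_triangle (empDist x) f q, hellinger_comm f q]
  calc _ ≤ ∑ x : Fin M → α, Real.exp (-2 * M * t ^ 2) * ∏ i, empDist x (x i) :=
        Finset.sum_le_sum fun x _ => hbound x
    _ ≤ Real.exp (-2 * M * t ^ 2) * ((M : ℝ) + 1) ^ Fintype.card α := by
        rw [← Finset.mul_sum]
        gcongr
        exact sum_prod_empDist_le hM
    _ = _ := mul_comm _ _

/-- If `X₁, …, X_M` are i.i.d. with pmf `f`, `p̂` is their empirical distribution, and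
`δ ≥ H(q‖f)`, then `Pr(H(p̂‖q) ≥ δ) ≤ (M+1)^{|α|} · exp(−2M(δ − H(q‖f))²)`. -/
theorem prob_hellinger_emp_ge {α : Type*} [Fintype α] [DecidableEq α]
    (f q : α → ℝ) (hf : IsPmf f) (hq : IsPmf q) (M : ℕ) (hM : 1 ≤ M)
    (δ : ℝ) (hδ : hellinger q f ≤ δ) :
    (∑ x : Fin M → α,
        Set.indicator {x : Fin M → α | δ ≤ hellinger (empDist x) q}
          (fun x => ∏ i, f (x i)) x) ≤
      ((M : ℝ) + 1) ^ (Fintype.card α) *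
        Real.exp (-2 * M * (δ - hellinger q f) ^ 2) :=
  prob_hellinger_emp_ge_general f q hf M hM δ hδ
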